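/- Let C be a chain complex over an additive category containing a segment A → B⊕C → D⊕E → F, where the map A → B⊕C has components (0, f), the middle map is the matrix [[Φ, α],[β, γ]] with Φ : B → D an isomorphism, and the map D⊕E → F has components (0, g). Then C is chain homotopy equivalent to the complex obtained by replacing this segment with A → C → E → F, where the middle map is γ − β∘Φ⁻¹∘α. -/

import Mathlib

open CategoryTheory CategoryTheory.Limits

/-- A (cochain) complex segment `X0 → X1 → X2 → X3` over an additive category:
four consecutive terms of a chain complex with composable differentials squaring to zero.
(All other terms of the ambient complex are unchanged by Gaussian elimination, so the
statement is about this four-term segment.) -/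
structure FourComplex (C : Type*) [Category C] [Preadditive C] where
  X0 : C
  X1 : C
  X2 : C
  X3 : C
  d0 : X0 ⟶ X1
  d1 : X1 ⟶ X2
  d2 : X2 ⟶ X3
  w01 : d0 ≫ d1 = 0
  w12 : d1 ≫ d2 = 0

namespace FourComplex

variable {C : Type*} [Category C] [Preadditive C]

/-- A chain map between four-term complexes. -/
structure Map (X Y : FourComplex C) where
  f0 : X.X0 ⟶ Y.X0
  f1 : X.X1 ⟶ Y.X1
  f2 : X.X2 ⟶ Y.X2
  f3 : X.X3 ⟶ Y.X3
  comm0 : f0 ≫ Y.d0 = X.d0 ≫ f1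
  comm1 : f1 ≫ Y.d1 = X.d1 ≫ f2
  comm2 : f2 ≫ Y.d2 = X.d2 ≫ f3

/-- The identity chain map. -/
def Map.id (X : FourComplex C) : Map X X :=
  ⟨𝟙 _, 𝟙 _, 𝟙 _, 𝟙 _, by simp, by simp, by simp⟩

/-- Composition of chain maps. -/
def Map.comp {X Y Z : FourComplex C} (φ : Map X Y) (ψ : Map Y Z) : Map X Z :=
  ⟨φ.f0 ≫ ψ.f0, φ.f1 ≫ ψ.f1, φ.f2 ≫ ψ.f2, φ.f3 ≫ ψ.f3,
    by rw [Category.assoc, ψ.comm0, ← Category.assoc, φ.comm0, Category.assoc],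
    by rw [Category.assoc, ψ.comm1, ← Category.assoc, φ.comm1, Category.assoc],
    by rw [Category.assoc, ψ.comm2, ← Category.assoc, φ.comm2, Category.assoc]⟩

/-- A chain homotopy between two chain maps of four-term complexes, given by
maps `h_i : X_i → Y_{i-1}` with `φ − ψ = d∘h + h∘d` in each degree. -/
structure Htpy {X Y : FourComplex C} (φ ψ : Map X Y) where
  h1 : X.X1 ⟶ Y.X0
  h2 : X.X2 ⟶ Y.X1
  h3 : X.X3 ⟶ Y.X2
  comm0 : φ.f0 - ψ.f0 = X.d0 ≫ h1
  comm1 : φ.f1 - ψ.f1 = X.d1 ≫ h2 + h1 ≫ Y.d0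
  comm2 : φ.f2 - ψ.f2 = X.d2 ≫ h3 + h2 ≫ Y.d1
  comm3 : φ.f3 - ψ.f3 = h3 ≫ Y.d2

/-- A chain homotopy equivalence between four-term complexes. -/
structure Equiv (X Y : FourComplex C) where
  hom : Map X Y
  inv : Map Y X
  homInvId : Htpy (hom.comp inv) (Map.id X)
  invHomId : Htpy (inv.comp hom) (Map.id Y)

end FourComplex

/-!
Gaussian elimination is a change of basis. Projecting onto `Cc ⊕ E` (correcting the `E`
component by `-Φ⁻¹ ≫ β` on `D`) and including `Cc ⊕ E` back with the `B` component
`-α ≫ Φ⁻¹` gives chain maps whose composite on the eliminated complex is the identity on the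
nose. The other composite differs from the identity by `d ≫ h + h ≫ d`, where the homotopy
`h : D ⊞ E ⟶ B ⊞ Cc` is `-Φ⁻¹` on `D` and zero elsewhere: it cancels the isomorphism `Φ`.
-/

namespace FourComplex

variable {C : Type*} [Category C] [Preadditive C]

attribute [simps] Map.id Map.comp

theorem Map.ext {X Y : FourComplex C} {φ ψ : Map X Y} (h0 : φ.f0 = ψ.f0) (h1 : φ.f1 = ψ.f1)
    (h2 : φ.f2 = ψ.f2) (h3 : φ.f3 = ψ.f3) : φ = ψ := by
  cases φ; cases ψ; subst h0 h1 h2 h3; rfl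

def Htpy.refl {X Y : FourComplex C} (φ : Map X Y) : Htpy φ φ :=
  ⟨0, 0, 0, by simp, by simp, by simp, by simp⟩

def Htpy.ofEq {X Y : FourComplex C} {φ ψ : Map X Y} (h : φ = ψ) : Htpy φ ψ :=
  h ▸ Htpy.refl φ

noncomputable section GaussianElimination

variable [HasBinaryBiproducts C] {A B Cc D E Ff : C}
  (f : A ⟶ Cc) (Φ : B ⟶ D) [IsIso Φ] (α : Cc ⟶ D) (β : B ⟶ E) (γ : Cc ⟶ E) (g : E ⟶ Ff)
  (hfα : f ≫ α = 0) (hfγ : f ≫ γ = 0) (hβg : β ≫ g = 0) (hγg : γ ≫ g = 0)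

abbrev blockSegment : FourComplex C where
  X0 := A
  X1 := B ⊞ Cc
  X2 := D ⊞ E
  X3 := Ff
  d0 := biprod.lift 0 f
  d1 := biprod.desc (biprod.lift Φ β) (biprod.lift α γ)
  d2 := biprod.desc 0 g
  w01 := by ext <;> simp [hfα, hfγ]
  w12 := by ext <;> simp [hβg, hγg]

abbrev eliminatedSegment : FourComplex C where
  X0 := A
  X1 := Cc
  X2 := E
  X3 := Ff
  d0 := f
  d1 := γ - α ≫ inv Φ ≫ β
  d2 := g
  w01 := by simp [Preadditive.comp_sub, hfγ, reassoc_of% hfα]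
  w12 := by simp [Preadditive.sub_comp, hγg, hβg]

variable {f Φ α β γ g hfα hfγ hβg hγg}

@[simps]
def eliminationProj : Map (blockSegment f Φ α β γ g hfα hfγ hβg hγg)
    (eliminatedSegment f Φ α β γ g hfα hfγ hβg hγg) where
  f0 := 𝟙 A
  f1 := biprod.snd
  f2 := biprod.desc (-(inv Φ ≫ β)) (𝟙 E)
  f3 := 𝟙 Ff
  comm0 := by simp
  comm1 := by
    ext <;> simp [Preadditive.comp_sub]
    abel
  comm2 := by ext <;> simp [hβg]

@[simps]
def eliminationIncl : Map (eliminatedSegment f Φ α β γ g hfα hfγ hβg hγg)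
    (blockSegment f Φ α β γ g hfα hfγ hβg hγg) where
  f0 := 𝟙 A
  f1 := biprod.lift (-(α ≫ inv Φ)) (𝟙 Cc)
  f2 := biprod.lift 0 (𝟙 E)
  f3 := 𝟙 Ff
  comm0 := by ext <;> simp [reassoc_of% hfα]
  comm1 := by
    ext <;> simp [Preadditive.sub_comp]
    abel
  comm2 := by simp

theorem eliminationIncl_comp_eliminationProj :
    eliminationIncl.comp eliminationProj =
      Map.id (eliminatedSegment f Φ α β γ g hfα hfγ hβg hγg) :=
  Map.ext (by simp) (by simp) (by simp) (by simp)

def eliminationHtpy : Htpy (eliminationProj.comp eliminationIncl)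
    (Map.id (blockSegment f Φ α β γ g hfα hfγ hβg hγg)) where
  h1 := 0
  h2 := biprod.desc (-(inv Φ ≫ biprod.inl)) 0
  h3 := 0
  comm0 := by simp
  comm1 := by ext <;> simp [Preadditive.sub_comp, Preadditive.comp_sub]
  comm2 := by ext <;> simp [Preadditive.sub_comp, Preadditive.comp_sub]
  comm3 := by simp

variable (hfα hfγ hβg hγg) in
def eliminationEquiv : Equiv (blockSegment f Φ α β γ g hfα hfγ hβg hγg)
    (eliminatedSegment f Φ α β γ g hfα hfγ hβg hγg) where
  hom := eliminationProj
  inv := eliminationIncl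
  homInvId := eliminationHtpy
  invHomId := Htpy.ofEq eliminationIncl_comp_eliminationProj

end GaussianElimination

end FourComplex

theorem gaussian_elimination
    {C : Type*} [Category C] [Preadditive C] [HasBinaryBiproducts C]
    (A B Cc D E Ff : C)
    (f : A ⟶ Cc) (Φ : B ⟶ D) [IsIso Φ] (α : Cc ⟶ D) (β : B ⟶ E) (γ : Cc ⟶ E) (g : E ⟶ Ff)
    (hfα : f ≫ α = 0) (hfγ : f ≫ γ = 0) (hβg : β ≫ g = 0) (hγg : γ ≫ g = 0) :
    Nonempty (FourComplex.Equiv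
      ({ X0 := A, X1 := B ⊞ Cc, X2 := D ⊞ E, X3 := Ff
         d0 := biprod.lift 0 f
         d1 := biprod.desc (biprod.lift Φ β) (biprod.lift α γ)
         d2 := biprod.desc 0 g
         w01 := by
           ext
           · simp [hfα]
           · simp [hfγ]
         w12 := by
           ext
           · simp [hβg]
           · simp [hγg] } : FourComplex C)
      ({ X0 := A, X1 := Cc, X2 := E, X3 := Ff
         d0 := f
         d1 := γ - α ≫ inv Φ ≫ β
         d2 := g
         w01 := by simp [Preadditive.comp_sub, hfγ, reassoc_of% hfα]
         w12 := by simp [Preadditive.sub_comp, hγg, hβg] } : FourComplex C)) := by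
  exact ⟨FourComplex.eliminationEquiv hfα hfγ hβg hγg⟩
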